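/- Let A = [[1,2],[0,1]] and B = [[1,0],[2,1]] in SL₂(ℤ). Then A and B generate a free group of rank 2; i.e., no nontrivial reduced word in A and B equals the identity. -/

import Mathlib

open Pointwise

/-- A = [[1,2],[0,1]] in SL₂(ℤ). -/
def matA : Matrix.SpecialLinearGroup (Fin 2) ℤ :=
  ⟨!![1, 2; 0, 1], by simp [Matrix.det_fin_two_of]⟩

/-- B = [[1,0],[2,1]] in SL₂(ℤ). -/
def matB : Matrix.SpecialLinearGroup (Fin 2) ℤ :=
  ⟨!![1, 0; 2, 1], by simp [Matrix.det_fin_two_of]⟩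

/-- Nonzero integer vectors in the plane. -/
abbrev Vnz := {v : Fin 2 → ℤ // v ≠ 0}

instance : SMul (Matrix.SpecialLinearGroup (Fin 2) ℤ) Vnz :=
  ⟨fun g v => ⟨g.1.mulVec v.1, by
    intro h
    apply v.2
    have : ((g⁻¹ * g : Matrix.SpecialLinearGroup (Fin 2) ℤ) :
        Matrix (Fin 2) (Fin 2) ℤ).mulVec v.1 = 0 := by
      rw [Matrix.SpecialLinearGroup.coe_mul, ← Matrix.mulVec_mulVec, h, Matrix.mulVec_zero]
    simpa using this⟩⟩

lemma smul_def (g : Matrix.SpecialLinearGroup (Fin 2) ℤ) (v : Vnz) :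
    (g • v).1 = g.1.mulVec v.1 := rfl

instance : MulAction (Matrix.SpecialLinearGroup (Fin 2) ℤ) Vnz where
  one_smul v := Subtype.ext (by rw [smul_def]; simp)
  mul_smul g h v := Subtype.ext (by simp only [smul_def, Matrix.SpecialLinearGroup.coe_mul, Matrix.mulVec_mulVec])

lemma mulVec_fin_two (a b c d : ℤ) (v : Fin 2 → ℤ) :
    (!![a, b; c, d]).mulVec v = ![a * v 0 + b * v 1, c * v 0 + d * v 1] := by
  funext i
  fin_cases i <;> simp [Matrix.mulVec, dotProduct, Fin.sum_univ_two]

lemma matA_smul (v : Vnz) : (matA • v).1 = ![v.1 0 + 2 * v.1 1, v.1 1] := by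
  rw [smul_def]
  show (!![1, 2; 0, 1] : Matrix (Fin 2) (Fin 2) ℤ).mulVec v.1 = _
  rw [mulVec_fin_two]; norm_num

lemma matB_smul (v : Vnz) : (matB • v).1 = ![v.1 0, 2 * v.1 0 + v.1 1] := by
  rw [smul_def]
  show (!![1, 0; 2, 1] : Matrix (Fin 2) (Fin 2) ℤ).mulVec v.1 = _
  rw [mulVec_fin_two]; norm_num

lemma matA_inv_smul (v : Vnz) : (matA⁻¹ • v).1 = ![v.1 0 - 2 * v.1 1, v.1 1] := by
  rw [smul_def, Matrix.SpecialLinearGroup.coe_inv]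
  show (Matrix.adjugate !![1, 2; 0, 1]).mulVec v.1 = _
  rw [Matrix.adjugate_fin_two, mulVec_fin_two]
  norm_num
  ring

lemma matB_inv_smul (v : Vnz) : (matB⁻¹ • v).1 = ![v.1 0, v.1 1 - 2 * v.1 0] := by
  rw [smul_def, Matrix.SpecialLinearGroup.coe_inv]
  show (Matrix.adjugate !![1, 0; 2, 1]).mulVec v.1 = _
  rw [Matrix.adjugate_fin_two, mulVec_fin_two]
  norm_num
  ring

/-- Ping-pong predicates on coordinates. -/
def PXA (x y : ℤ) : Prop := y.natAbs < x.natAbs ∧ (0 ≤ x ∧ 0 ≤ y ∨ x ≤ 0 ∧ y ≤ 0)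
def PYA (x y : ℤ) : Prop :=
  (y.natAbs < x.natAbs ∧ (0 < x ∧ y < 0 ∨ x < 0 ∧ 0 < y)) ∨ x = -y
def PXB (x y : ℤ) : Prop :=
  (x.natAbs < y.natAbs ∧ (0 ≤ x ∧ 0 ≤ y ∨ x ≤ 0 ∧ y ≤ 0)) ∨ x = y
def PYB (x y : ℤ) : Prop := x.natAbs < y.natAbs ∧ (0 < x ∧ y < 0 ∨ x < 0 ∧ 0 < y)

/-- Ping-pong sets. -/
def SXA : Set Vnz := {v | PXA (v.1 0) (v.1 1)}
def SXB : Set Vnz := {v | PXB (v.1 0) (v.1 1)}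
def SYA : Set Vnz := {v | PYA (v.1 0) (v.1 1)}
def SYB : Set Vnz := {v | PYB (v.1 0) (v.1 1)}

lemma vnz_ne (v : Vnz) : ¬(v.1 0 = 0 ∧ v.1 1 = 0) := by
  rintro ⟨h0, h1⟩
  apply v.2
  funext i
  fin_cases i <;> simpa

lemma dXX : Disjoint SXA SXB := by
  rw [Set.disjoint_left]; intro v h1 h2; have := vnz_ne v
  simp only [SXA, SXB, Set.mem_setOf_eq, PXA, PXB] at h1 h2; omega

lemma dYY : Disjoint SYA SYB := by
  rw [Set.disjoint_left]; intro v h1 h2; have := vnz_ne v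
  simp only [SYA, SYB, Set.mem_setOf_eq, PYA, PYB] at h1 h2; omega

lemma dXAYA : Disjoint SXA SYA := by
  rw [Set.disjoint_left]; intro v h1 h2; have := vnz_ne v
  simp only [SXA, SYA, Set.mem_setOf_eq, PXA, PYA] at h1 h2; omega

lemma dXAYB : Disjoint SXA SYB := by
  rw [Set.disjoint_left]; intro v h1 h2; have := vnz_ne v
  simp only [SXA, SYB, Set.mem_setOf_eq, PXA, PYB] at h1 h2; omega

lemma dXBYA : Disjoint SXB SYA := by
  rw [Set.disjoint_left]; intro v h1 h2; have := vnz_ne v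
  simp only [SXB, SYA, Set.mem_setOf_eq, PXB, PYA] at h1 h2; omega

lemma dXBYB : Disjoint SXB SYB := by
  rw [Set.disjoint_left]; intro v h1 h2; have := vnz_ne v
  simp only [SXB, SYB, Set.mem_setOf_eq, PXB, PYB] at h1 h2; omega

lemma kXA {x y : ℤ} (h0 : ¬(x = 0 ∧ y = 0)) (h : ¬ PYA x y) : PXA (x + 2 * y) y := by
  simp only [PXA, PYA] at *; omega

lemma kYA {x y : ℤ} (h0 : ¬(x = 0 ∧ y = 0)) (h : ¬ PXA x y) : PYA (x - 2 * y) y := by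
  simp only [PXA, PYA] at *; omega

lemma kXB {x y : ℤ} (h0 : ¬(x = 0 ∧ y = 0)) (h : ¬ PYB x y) : PXB x (2 * x + y) := by
  simp only [PXB, PYB] at *; omega

lemma kYB {x y : ℤ} (h0 : ¬(x = 0 ∧ y = 0)) (h : ¬ PXB x y) : PYB x (y - 2 * x) := by
  simp only [PXB, PYB] at *; omega

lemma stepXA {v : Vnz} (hv : v ∉ SYA) : matA • v ∈ SXA := by
  show PXA ((matA • v).1 0) ((matA • v).1 1)
  rw [matA_smul]
  simpa using kXA (vnz_ne v) hv

lemma stepXB {v : Vnz} (hv : v ∉ SYB) : matB • v ∈ SXB := by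
  show PXB ((matB • v).1 0) ((matB • v).1 1)
  rw [matB_smul]
  simpa using kXB (vnz_ne v) hv

lemma stepYA {v : Vnz} (hv : v ∉ SXA) : matA⁻¹ • v ∈ SYA := by
  show PYA ((matA⁻¹ • v).1 0) ((matA⁻¹ • v).1 1)
  rw [matA_inv_smul]
  simpa using kYA (vnz_ne v) hv

lemma stepYB {v : Vnz} (hv : v ∉ SXB) : matB⁻¹ • v ∈ SYB := by
  show PYB ((matB⁻¹ • v).1 0) ((matB⁻¹ • v).1 1)
  rw [matB_inv_smul]
  simpa using kYB (vnz_ne v) hv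

/-- A and B generate a free group of rank 2: the homomorphism from the free
group on two generators sending them to A and B is injective, i.e. no
nontrivial reduced word in A and B is the identity. -/
theorem matA_matB_free :
    Function.Injective
      (FreeGroup.lift (![matA, matB] : Fin 2 → Matrix.SpecialLinearGroup (Fin 2) ℤ)) := by
  apply FreeGroup.injective_lift_of_ping_pong ![matA, matB] ![SXA, SXB] ![SYA, SYB]
  · intro i
    fin_cases i
    · exact ⟨⟨![1, 0], by intro h; simpa using congrFun h 0⟩, by
        show PXA 1 0; simp [PXA]⟩
    · exact ⟨⟨![0, 1], by intro h; simpa using congrFun h 1⟩, by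
        show PXB 0 1; simp [PXB]⟩
  · intro i j hij
    fin_cases i <;> fin_cases j
    · exact absurd rfl hij
    · exact dXX
    · exact dXX.symm
    · exact absurd rfl hij
  · intro i j hij
    fin_cases i <;> fin_cases j
    · exact absurd rfl hij
    · exact dYY
    · exact dYY.symm
    · exact absurd rfl hij
  · intro i j
    fin_cases i <;> fin_cases j
    · exact dXAYA
    · exact dXAYB
    · exact dXBYA
    · exact dXBYB
  · intro i
    fin_cases i
    · rintro p ⟨v, hv, rfl⟩
      exact stepXA hv
    · rintro p ⟨v, hv, rfl⟩
      exact stepXB hv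
  · intro i
    fin_cases i
    · rintro p ⟨v, hv, rfl⟩
      exact stepYA hv
    · rintro p ⟨v, hv, rfl⟩
      exact stepYB hv
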